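/- Let (S, ⟨·,·⟩) be a real inner product space. Then the functional Φ : S → ℝ defined by Φ(v) = exp(−½⟨v,v⟩) is positive definite: for all v_1,…,v_n ∈ S and all z_1,…,z_n ∈ ℂ, the sum ∑_{j,k=1}^n z_j \overline{z_k} exp(−½‖v_j − v_k‖²) is a nonnegative real number. -/

import Mathlib

open scoped ComplexOrder

theorem gram_pow_nonneg (n d m : ℕ) (x : Fin n → Fin d → ℝ) (w : Fin n → ℂ) :
    0 ≤ ∑ j, ∑ k, w j * (starRingEnd ℂ) (w k) * ((∑ b, x j b * x k b : ℝ) : ℂ) ^ m := by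
  classical
  set P := Fintype.piFinset (fun _ : Fin m => (Finset.univ : Finset (Fin d))) with hP
  set g : (Fin m → Fin d) → ℂ := fun f => ∑ j, w j * ∏ i, (x j (f i) : ℂ) with hg
  have hpow : ∀ j k : Fin n, ((∑ b, x j b * x k b : ℝ) : ℂ) ^ m
      = ∑ f ∈ P, (∏ i, (x j (f i) : ℂ)) * ∏ i, (x k (f i) : ℂ) := by
    intro j k
    push_cast
    simp only [← Finset.prod_mul_distrib, hP]
    rw [show (∑ c : Fin d, (x j c : ℂ) * (x k c : ℂ)) ^ m
        = ∏ _i : Fin m, (∑ c : Fin d, (x j c : ℂ) * (x k c : ℂ)) by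
      simp [Finset.prod_const], Finset.prod_univ_sum]
  have key : (∑ j, ∑ k, w j * (starRingEnd ℂ) (w k) * ((∑ b, x j b * x k b : ℝ) : ℂ) ^ m)
      = ∑ f ∈ P, g f * (starRingEnd ℂ) (g f) := by
    simp_rw [hpow, Finset.mul_sum, hg, map_sum, map_mul, map_prod, Complex.conj_ofReal,
      Finset.sum_mul, Finset.mul_sum]
    have h1 : ∀ j : Fin n, (∑ k : Fin n, ∑ f ∈ P,
          w j * (starRingEnd ℂ) (w k) * ((∏ i, (x j (f i) : ℂ)) * ∏ i, (x k (f i) : ℂ)))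
        = ∑ f ∈ P, ∑ k : Fin n,
          w j * (starRingEnd ℂ) (w k) * ((∏ i, (x j (f i) : ℂ)) * ∏ i, (x k (f i) : ℂ)) :=
      fun j => Finset.sum_comm
    simp_rw [h1]
    rw [Finset.sum_comm]
    exact Finset.sum_congr rfl fun f _ => Finset.sum_congr rfl fun j _ =>
      Finset.sum_congr rfl fun k _ => by ring
  rw [key]
  refine Finset.sum_nonneg fun f _ => ?_
  rw [Complex.mul_conj]
  exact_mod_cast Complex.normSq_nonneg _


/-- **Positive definiteness of the Gaussian functional on an inner product space.**
Let `S` be a real inner product space and `Φ v = exp (-½ ⟪v, v⟫)`. Then for all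
`v₁, …, vₙ ∈ S` and `z₁, …, zₙ ∈ ℂ`, the sum `∑_{j,k} z_j conj (z_k) Φ (v_j - v_k)`
is a nonnegative (real) complex number. -/
theorem gaussian_functional_posDef
    {S : Type*} [NormedAddCommGroup S] [InnerProductSpace ℝ S]
    (Φ : S → ℝ) (hΦ : ∀ v : S, Φ v = Real.exp (-(1 / 2) * (inner ℝ v v : ℝ)))
    (n : ℕ) (v : Fin n → S) (z : Fin n → ℂ) :
    0 ≤ ∑ j : Fin n, ∑ k : Fin n,
      z j * (starRingEnd ℂ) (z k) * ((Φ (v j - v k) : ℝ) : ℂ) := by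
  classical
  set a : Fin n → ℝ := fun j => Real.exp (-(1 / 2) * (inner ℝ (v j) (v j) : ℝ)) with ha
  set w : Fin n → ℂ := fun j => z j * (a j : ℂ) with hw
  set K : Fin n → Fin n → ℝ := fun j k => (inner ℝ (v j) (v k) : ℝ) with hK
  -- coordinates
  set V := Submodule.span ℝ (Set.range v) with hV
  haveI : FiniteDimensional ℝ V := FiniteDimensional.span_of_finite ℝ (Set.finite_range v)
  set d := Module.finrank ℝ V with hd
  set b := stdOrthonormalBasis ℝ V with hb
  set vV : Fin n → V := fun j => ⟨v j, Submodule.subset_span ⟨j, rfl⟩⟩ with hvV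
  set x : Fin n → Fin d → ℝ := fun j i => b.repr (vV j) i with hx
  have hKx : ∀ j k, K j k = ∑ i, x j i * x k i := by
    intro j k
    have h1 : K j k = (inner ℝ (vV j) (vV k) : ℝ) := (Submodule.coe_inner V (vV j) (vV k)).symm
    rw [h1, ← b.repr.inner_map_map (vV j) (vV k), PiLp.inner_apply]
    simp [RCLike.inner_apply, mul_comm, hx]
    rfl
  -- kernel decomposition
  have hterm : ∀ j k, (Φ (v j - v k) : ℝ) = a j * a k * Real.exp (K j k) := by
    intro j k
    rw [hΦ, ha, ← Real.exp_add, ← Real.exp_add]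
    congr 1
    rw [real_inner_sub_sub_self]
    simp only [hK]
    ring
  have hsummable : ∀ j k : Fin n, Summable fun m : ℕ => ((K j k : ℂ)) ^ m / m.factorial :=
    fun j k => NormedSpace.expSeries_div_summable ((K j k : ℂ))
  have hexp : ∀ j k, ((Real.exp (K j k) : ℝ) : ℂ) = ∑' m : ℕ, (K j k : ℂ) ^ m / m.factorial := by
    intro j k
    rw [Complex.ofReal_exp, Complex.exp_eq_exp_ℂ, NormedSpace.exp_eq_tsum_div]
  calc (0 : ℂ) ≤ ∑' m : ℕ, ∑ j : Fin n, ∑ k : Fin n,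
        w j * (starRingEnd ℂ) (w k) * ((K j k : ℂ) ^ m / m.factorial) := by
        refine tsum_nonneg fun m => ?_
        have : ∀ j k : Fin n, w j * (starRingEnd ℂ) (w k) * ((K j k : ℂ) ^ m / m.factorial)
            = ((m.factorial : ℂ))⁻¹ * (w j * (starRingEnd ℂ) (w k) * ((∑ i, x j i * x k i : ℝ) : ℂ) ^ m) := by
          intro j k; rw [← hKx]; ring
        simp_rw [this, ← Finset.mul_sum]
        refine mul_nonneg ?_ (gram_pow_nonneg n d m x w)
        rw [show ((m.factorial : ℂ))⁻¹ = ((((m.factorial : ℝ))⁻¹ : ℝ) : ℂ) by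
          rw [Complex.ofReal_inv]; norm_num]
        exact Complex.zero_le_real.mpr (inv_nonneg.mpr (Nat.cast_nonneg _))
    _ = ∑ j : Fin n, ∑ k : Fin n,
        w j * (starRingEnd ℂ) (w k) * ∑' m : ℕ, ((K j k : ℂ) ^ m / m.factorial) := by
        have hs : ∀ j k : Fin n, Summable fun m : ℕ =>
            w j * (starRingEnd ℂ) (w k) * ((K j k : ℂ) ^ m / m.factorial) :=
          fun j k => (hsummable j k).mul_left _
        rw [Summable.tsum_finsetSum (fun j _ => summable_sum (fun k _ => hs j k))]
        refine Finset.sum_congr rfl fun j _ => ?_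
        rw [Summable.tsum_finsetSum (fun k _ => hs j k)]
        exact Finset.sum_congr rfl fun k _ => tsum_mul_left
    _ = ∑ j : Fin n, ∑ k : Fin n,
        z j * (starRingEnd ℂ) (z k) * ((Φ (v j - v k) : ℝ) : ℂ) := by
        refine Finset.sum_congr rfl fun j _ => Finset.sum_congr rfl fun k _ => ?_
        rw [← hexp, hterm, hw]
        push_cast
        rw [map_mul, Complex.conj_ofReal]
        ring
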